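/- Let Ω₁, Ω₂ be the Choi operators of two quantum channels on a d-dimensional Hilbert space, η₁+η₂=1 with η₁,η₂ ≥ 0, and let {M₀, M₁, M₂} be positive operators with M₀+M₁+M₂ = ξᵀ⊗I for some density operator ξ, satisfying the no-error conditions tr(M₁Ω₂) = tr(M₂Ω₁) = 0. Then the failure probability tr(M₀(η₁Ω₁+η₂Ω₂)) is at least 2√(η₁η₂) · tr|√Ω₁ (ξᵀ⊗I) √Ω₂|. -/

import Mathlib

open Matrix ComplexOrder Kronecker BigOperators

noncomputable def Matrix.PosSemidef.sqrt {n 𝕜 : Type*} [Fintype n] [RCLike 𝕜] [DecidableEq n]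
    {A : Matrix n n 𝕜} (hA : A.PosSemidef) : Matrix n n 𝕜 :=
  (hA.1.eigenvectorUnitary : Matrix n n 𝕜) * diagonal (((↑) : ℝ → 𝕜) ∘ Real.sqrt ∘ hA.1.eigenvalues) *
    (star hA.1.eigenvectorUnitary : Matrix n n 𝕜)

/-- Trace norm: tr|X| = tr √(Xᴴ X). -/
noncomputable def traceNorm {n : Type*} [Fintype n] [DecidableEq n] (X : Matrix n n ℂ) : ℝ :=
  ((Matrix.posSemidef_conjTranspose_mul_self X).sqrt).trace.re

/-!
Put `A = √M₀ √Ω₁` and `B = √M₀ √Ω₂`. The conditions `tr(M₁Ω₂) = tr(M₂Ω₁) = 0` force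
`M₁ √Ω₂ = 0` and `√Ω₁ M₂ = 0`, so the sandwich `√Ω₁ (ξᵀ ⊗ I) √Ω₂` collapses to
`√Ω₁ M₀ √Ω₂ = AᴴB`, while `tr(M₀Ωᵢ)` are the squared Frobenius norms of `A` and `B`. The bound
then follows from the Cauchy–Schwarz inequality `tr|AᴴB| ≤ ‖A‖₂ ‖B‖₂` for the trace norm and
`2xy ≤ x² + y²`.

For the trace-norm inequality, diagonalise `XᴴX` (with `X = AᴴB`) in an orthonormal basis `eⱼ`:
then `tr|X| = ∑ ‖X eⱼ‖` and the vectors `X eⱼ` are pairwise orthogonal, so some orthonormal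
basis `bⱼ` satisfies `‖X eⱼ‖ = ⟪bⱼ, X eⱼ⟫ = ⟪A bⱼ, B eⱼ⟫`. Cauchy–Schwarz for the sum and
Bessel's inequality for `∑ ‖A bⱼ‖²` and `∑ ‖B eⱼ‖²` conclude.
-/

open scoped InnerProductSpace

namespace Matrix.PosSemidef

variable {n 𝕜 : Type*} [Fintype n] [DecidableEq n] [RCLike 𝕜] {A B : Matrix n n 𝕜}

lemma posSemidef_sqrt (hA : A.PosSemidef) : hA.sqrt.PosSemidef := by
  refine (posSemidef_diagonal_iff.2 fun i => ?_).mul_mul_conjTranspose_same _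
  exact RCLike.ofReal_nonneg.2 (Real.sqrt_nonneg _)

lemma sqrt_mul_self (hA : A.PosSemidef) : hA.sqrt * hA.sqrt = A := by
  set U : Matrix n n 𝕜 := (hA.1.eigenvectorUnitary : Matrix n n 𝕜)
  have hU : star U * U = 1 := Unitary.coe_star_mul_self _
  have hD : diagonal (((↑) : ℝ → 𝕜) ∘ Real.sqrt ∘ hA.1.eigenvalues) *
      diagonal (((↑) : ℝ → 𝕜) ∘ Real.sqrt ∘ hA.1.eigenvalues) =
        diagonal (RCLike.ofReal ∘ hA.1.eigenvalues) := by
    rw [diagonal_mul_diagonal]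
    congr 1
    funext i
    simp only [Function.comp_apply, ← RCLike.ofReal_mul,
      Real.mul_self_sqrt (hA.eigenvalues_nonneg i)]
  conv_rhs => rw [hA.1.spectral_theorem, Unitary.conjStarAlgAut_apply]
  simp only [Matrix.PosSemidef.sqrt, Matrix.mul_assoc]
  rw [← Matrix.mul_assoc (star U) U, hU, Matrix.one_mul, ← Matrix.mul_assoc _ _ (star U), hD]

lemma re_trace_sqrt (hA : A.PosSemidef) :
    RCLike.re hA.sqrt.trace = ∑ j, √(hA.1.eigenvalues j) := by
  rw [Matrix.PosSemidef.sqrt, trace_mul_cycle, Unitary.coe_star_mul_self, Matrix.one_mul,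
    trace_diagonal, map_sum]
  simp

lemma conjTranspose_sqrt_mul_mul_sqrt_mul (hA : A.PosSemidef) (hB : B.PosSemidef)
    {C : Matrix n n 𝕜} (hC : C.PosSemidef) :
    (hA.sqrt * hB.sqrt)ᴴ * (hA.sqrt * hC.sqrt) = hB.sqrt * A * hC.sqrt := by
  rw [conjTranspose_mul, hA.posSemidef_sqrt.1.eq, hB.posSemidef_sqrt.1.eq, Matrix.mul_assoc,
    ← Matrix.mul_assoc hA.sqrt, hA.sqrt_mul_self, Matrix.mul_assoc]

lemma trace_mul_eq_trace_conjTranspose_mul_self (hA : A.PosSemidef) (hB : B.PosSemidef) :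
    (A * B).trace = ((hA.sqrt * hB.sqrt)ᴴ * (hA.sqrt * hB.sqrt)).trace := by
  rw [hA.conjTranspose_sqrt_mul_mul_sqrt_mul hB hB, trace_mul_cycle, hB.sqrt_mul_self,
    trace_mul_comm]

lemma mul_sqrt_eq_zero_of_trace_mul_eq_zero (hA : A.PosSemidef) (hB : B.PosSemidef)
    (h : (A * B).trace = 0) : A * hB.sqrt = 0 := by
  rw [hA.trace_mul_eq_trace_conjTranspose_mul_self hB,
    trace_conjTranspose_mul_self_eq_zero_iff] at h
  rw [← hA.sqrt_mul_self, Matrix.mul_assoc, h, Matrix.mul_zero]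

lemma sqrt_mul_add_add_mul_sqrt_of_trace_mul_eq_zero (hA : A.PosSemidef) (hB : B.PosSemidef)
    {M₀ M₁ M₂ : Matrix n n 𝕜} (hM₀ : M₀.PosSemidef) (hM₁ : M₁.PosSemidef) (hM₂ : M₂.PosSemidef)
    (h₁ : (M₁ * B).trace = 0) (h₂ : (M₂ * A).trace = 0) :
    hA.sqrt * (M₀ + M₁ + M₂) * hB.sqrt = (hM₀.sqrt * hA.sqrt)ᴴ * (hM₀.sqrt * hB.sqrt) := by
  have hM₁B : M₁ * hB.sqrt = 0 := hM₁.mul_sqrt_eq_zero_of_trace_mul_eq_zero hB h₁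
  have hAM₂ : hA.sqrt * M₂ = 0 := by
    simpa only [conjTranspose_mul, hM₂.1.eq, hA.posSemidef_sqrt.1.eq, conjTranspose_zero] using
      congrArg Matrix.conjTranspose (hM₂.mul_sqrt_eq_zero_of_trace_mul_eq_zero hA h₂)
  rw [hM₀.conjTranspose_sqrt_mul_mul_sqrt_mul hA hB, Matrix.mul_add, Matrix.mul_add,
    Matrix.add_mul, Matrix.add_mul, hAM₂, Matrix.mul_assoc _ M₁, hM₁B, Matrix.mul_zero,
    Matrix.zero_mul, add_zero, add_zero]

end Matrix.PosSemidef

theorem exists_orthonormalBasis_inner_eq_norm_of_orthogonal {𝕜 E ι : Type*} [RCLike 𝕜]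
    [NormedAddCommGroup E] [InnerProductSpace 𝕜 E] [FiniteDimensional 𝕜 E] [Fintype ι]
    (card_ι : Module.finrank 𝕜 E = Fintype.card ι) {w : ι → E}
    (hw : Pairwise fun i j => ⟪w i, w j⟫_𝕜 = 0) :
    ∃ b : OrthonormalBasis ι 𝕜 E, ∀ i, ⟪b i, w i⟫_𝕜 = ‖w i‖ := by
  set u : ι → E := fun i => (‖w i‖⁻¹ : 𝕜) • w i
  have hu : Orthonormal 𝕜 ({i | w i ≠ 0}.domRestrict u) := by
    refine ⟨fun i => norm_smul_inv_norm i.2, fun i j hij => ?_⟩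
    change ⟪u i, u j⟫_𝕜 = 0
    rw [inner_smul_left, inner_smul_right, hw (Subtype.coe_ne_coe.2 hij), mul_zero, mul_zero]
  obtain ⟨b, hb⟩ := hu.exists_orthonormalBasis_extension_of_card_eq card_ι
  refine ⟨b, fun i => ?_⟩
  by_cases hi : w i = 0
  · simp [hi]
  · rw [hb i hi, inner_smul_left, inner_self_eq_norm_sq_to_K, map_inv₀, RCLike.conj_ofReal]
    field_simp

section EuclideanSpace

variable {n 𝕜 : Type*} [Fintype n] [DecidableEq n] [RCLike 𝕜]

lemma inner_toEuclideanCLM_conjTranspose_mul (A B : Matrix n n 𝕜) (x y : EuclideanSpace 𝕜 n) :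
    ⟪x, toEuclideanCLM (n := n) (𝕜 := 𝕜) (Aᴴ * B) y⟫_𝕜 =
      ⟪toEuclideanCLM (n := n) (𝕜 := 𝕜) A x, toEuclideanCLM (n := n) (𝕜 := 𝕜) B y⟫_𝕜 := by
  rw [map_mul, ← star_eq_conjTranspose, map_star, ContinuousLinearMap.star_eq_adjoint,
    mul_apply_eq_comp, ContinuousLinearMap.adjoint_inner_right]

lemma sum_norm_toEuclideanCLM_sq_le {ι : Type*} [Fintype ι] (A : Matrix n n 𝕜)
    {v : ι → EuclideanSpace 𝕜 n} (hv : Orthonormal 𝕜 v) :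
    ∑ i, ‖toEuclideanCLM (n := n) (𝕜 := 𝕜) A (v i)‖ ^ 2 ≤ RCLike.re (Aᴴ * A).trace := by
  set r : n → EuclideanSpace 𝕜 n := fun k => WithLp.toLp 2 (star (A k))
  have hr : ∀ k x, toEuclideanCLM (n := n) (𝕜 := 𝕜) A x k = ⟪r k, x⟫_𝕜 := by
    intro k x
    simp [r, EuclideanSpace.inner_eq_star_dotProduct, mulVec, dotProduct_comm]
  have htr : RCLike.re (Aᴴ * A).trace = ∑ k, ‖r k‖ ^ 2 := by
    simp only [r, EuclideanSpace.norm_sq_eq, trace, diag, mul_apply, conjTranspose_apply, map_sum]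
    rw [Finset.sum_comm]
    simp only [RCLike.star_def, RCLike.conj_mul, ← RCLike.ofReal_pow, RCLike.ofReal_re,
      Pi.star_apply, RCLike.norm_conj]
  calc ∑ i, ‖toEuclideanCLM (n := n) (𝕜 := 𝕜) A (v i)‖ ^ 2
      = ∑ k, ∑ i, ‖⟪v i, r k⟫_𝕜‖ ^ 2 := by
        simp only [EuclideanSpace.norm_sq_eq, hr, norm_inner_symm]
        exact Finset.sum_comm
    _ ≤ ∑ k, ‖r k‖ ^ 2 := Finset.sum_le_sum fun k _ => hv.sum_inner_products_le (r k)
    _ = RCLike.re (Aᴴ * A).trace := htr.symm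

lemma inner_toEuclideanCLM_eigenvectorBasis (X : Matrix n n 𝕜) (hX : (Xᴴ * X).IsHermitian)
    (i j : n) :
    ⟪toEuclideanCLM (n := n) (𝕜 := 𝕜) X (hX.eigenvectorBasis i),
      toEuclideanCLM (n := n) (𝕜 := 𝕜) X (hX.eigenvectorBasis j)⟫_𝕜 =
        if i = j then (hX.eigenvalues j : 𝕜) else 0 := by
  have heig : toEuclideanCLM (n := n) (𝕜 := 𝕜) (Xᴴ * X) (hX.eigenvectorBasis j) =
      (hX.eigenvalues j : 𝕜) • hX.eigenvectorBasis j := by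
    apply WithLp.ofLp_injective
    rw [ofLp_toEuclideanCLM, hX.mulVec_eigenvectorBasis, WithLp.ofLp_smul,
      RCLike.real_smul_eq_coe_smul (K := 𝕜)]
  rw [← inner_toEuclideanCLM_conjTranspose_mul, heig, inner_smul_right,
    orthonormal_iff_ite.1 hX.eigenvectorBasis.orthonormal, mul_ite, mul_one, mul_zero]

lemma traceNorm_eq_sum_norm (X : Matrix n n ℂ) :
    traceNorm X = ∑ j, ‖toEuclideanCLM (n := n) (𝕜 := ℂ) X
      ((posSemidef_conjTranspose_mul_self X).1.eigenvectorBasis j)‖ := by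
  rw [traceNorm, ← RCLike.re_to_complex, PosSemidef.re_trace_sqrt]
  refine Finset.sum_congr rfl fun j _ => ?_
  have h := inner_toEuclideanCLM_eigenvectorBasis X (posSemidef_conjTranspose_mul_self X).1 j j
  rw [if_pos rfl, inner_self_eq_norm_sq_to_K] at h
  rw [← Real.sqrt_sq (norm_nonneg _)]
  exact congrArg Real.sqrt (by exact_mod_cast h.symm)

theorem traceNorm_conjTranspose_mul_le (A B : Matrix n n ℂ) :
    traceNorm (Aᴴ * B) ≤ √(Aᴴ * A).trace.re * √(Bᴴ * B).trace.re := by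
  set T : Matrix n n ℂ → EuclideanSpace ℂ n →L[ℂ] EuclideanSpace ℂ n :=
    fun M => toEuclideanCLM (n := n) (𝕜 := ℂ) M
  set e := (posSemidef_conjTranspose_mul_self (Aᴴ * B)).1.eigenvectorBasis
  have horth : Pairwise fun i j => ⟪T (Aᴴ * B) (e i), T (Aᴴ * B) (e j)⟫_ℂ = 0 :=
    fun i j hij => by simp only [T, e, inner_toEuclideanCLM_eigenvectorBasis, if_neg hij]
  obtain ⟨b, hb⟩ := exists_orthonormalBasis_inner_eq_norm_of_orthogonal
    (by rw [finrank_euclideanSpace]) horth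
  have hpt : ∀ j, ‖T (Aᴴ * B) (e j)‖ ≤ ‖T A (b j)‖ * ‖T B (e j)‖ := fun j => by
    have h := norm_inner_le_norm (𝕜 := ℂ) (T A (b j)) (T B (e j))
    rwa [← inner_toEuclideanCLM_conjTranspose_mul, hb j, RCLike.norm_ofReal, abs_norm] at h
  calc traceNorm (Aᴴ * B) = ∑ j, ‖T (Aᴴ * B) (e j)‖ := traceNorm_eq_sum_norm _
    _ ≤ ∑ j, ‖T A (b j)‖ * ‖T B (e j)‖ := Finset.sum_le_sum fun j _ => hpt j
    _ ≤ √(∑ j, ‖T A (b j)‖ ^ 2) * √(∑ j, ‖T B (e j)‖ ^ 2) :=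
      Real.sum_mul_le_sqrt_mul_sqrt _ _ _
    _ ≤ √(Aᴴ * A).trace.re * √(Bᴴ * B).trace.re := by
      gcongr
      · exact sum_norm_toEuclideanCLM_sq_le A b.orthonormal
      · exact sum_norm_toEuclideanCLM_sq_le B e.orthonormal

end EuclideanSpace

lemma two_mul_sqrt_mul_mul_sqrt_mul_sqrt_le {η₁ η₂ a b : ℝ} (hη₁ : 0 ≤ η₁) (hη₂ : 0 ≤ η₂)
    (ha : 0 ≤ a) (hb : 0 ≤ b) : 2 * √(η₁ * η₂) * (√a * √b) ≤ η₁ * a + η₂ * b := by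
  calc 2 * √(η₁ * η₂) * (√a * √b) = 2 * √(η₁ * a) * √(η₂ * b) := by
        rw [Real.sqrt_mul hη₁, Real.sqrt_mul hη₂, Real.sqrt_mul hη₁]
        ring
    _ ≤ √(η₁ * a) ^ 2 + √(η₂ * b) ^ 2 := two_mul_le_add_sq _ _
    _ = η₁ * a + η₂ * b := by rw [Real.sq_sqrt (by positivity), Real.sq_sqrt (by positivity)]

theorem stmt6_general {d : ℕ}
    (Ω₁ Ω₂ : Matrix (Fin d × Fin d) (Fin d × Fin d) ℂ)
    (hΩ₁ : Ω₁.PosSemidef) (hΩ₂ : Ω₂.PosSemidef)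
    (η₁ η₂ : ℝ) (hη₁ : 0 ≤ η₁) (hη₂ : 0 ≤ η₂)
    (ξ : Matrix (Fin d) (Fin d) ℂ)
    (M₀ M₁ M₂ : Matrix (Fin d × Fin d) (Fin d × Fin d) ℂ)
    (hM₀ : M₀.PosSemidef) (hM₁ : M₁.PosSemidef) (hM₂ : M₂.PosSemidef)
    (hnorm : M₀ + M₁ + M₂ = ξᵀ ⊗ₖ (1 : Matrix (Fin d) (Fin d) ℂ))
    (hne₁ : (M₁ * Ω₂).trace = 0) (hne₂ : (M₂ * Ω₁).trace = 0) :
    ((M₀ * ((η₁ : ℂ) • Ω₁ + (η₂ : ℂ) • Ω₂)).trace).re ≥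
      2 * Real.sqrt (η₁ * η₂) *
        traceNorm (hΩ₁.sqrt * (ξᵀ ⊗ₖ (1 : Matrix (Fin d) (Fin d) ℂ)) * hΩ₂.sqrt) := by
  rw [← hnorm, hΩ₁.sqrt_mul_add_add_mul_sqrt_of_trace_mul_eq_zero hΩ₂ hM₀ hM₁ hM₂ hne₁ hne₂,
    Matrix.mul_add, Matrix.mul_smul, Matrix.mul_smul, trace_add, trace_smul, trace_smul,
    hM₀.trace_mul_eq_trace_conjTranspose_mul_self hΩ₁,
    hM₀.trace_mul_eq_trace_conjTranspose_mul_self hΩ₂, Complex.add_re, smul_eq_mul, smul_eq_mul,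
    Complex.re_ofReal_mul, Complex.re_ofReal_mul, ge_iff_le]
  set A := hM₀.sqrt * hΩ₁.sqrt
  set B := hM₀.sqrt * hΩ₂.sqrt
  calc 2 * √(η₁ * η₂) * traceNorm (Aᴴ * B)
      ≤ 2 * √(η₁ * η₂) * (√(Aᴴ * A).trace.re * √(Bᴴ * B).trace.re) := by
        gcongr
        exact traceNorm_conjTranspose_mul_le A B
    _ ≤ η₁ * (Aᴴ * A).trace.re + η₂ * (Bᴴ * B).trace.re :=
      two_mul_sqrt_mul_mul_sqrt_mul_sqrt_le hη₁ hη₂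
        (Complex.nonneg_iff.1 (posSemidef_conjTranspose_mul_self A).trace_nonneg).1
        (Complex.nonneg_iff.1 (posSemidef_conjTranspose_mul_self B).trace_nonneg).1

theorem stmt6 {d : ℕ}
    (Ω₁ Ω₂ : Matrix (Fin d × Fin d) (Fin d × Fin d) ℂ)
    (hΩ₁ : Ω₁.PosSemidef) (hΩ₂ : Ω₂.PosSemidef)
    -- Choi operators of (trace-preserving) channels: partial trace over the output is the identity
    (hTP₁ : ∀ j k : Fin d, ∑ m : Fin d, Ω₁ (j, m) (k, m) = if j = k then 1 else 0)
    (hTP₂ : ∀ j k : Fin d, ∑ m : Fin d, Ω₂ (j, m) (k, m) = if j = k then 1 else 0)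
    (η₁ η₂ : ℝ) (hη₁ : 0 ≤ η₁) (hη₂ : 0 ≤ η₂) (hsum : η₁ + η₂ = 1)
    (ξ : Matrix (Fin d) (Fin d) ℂ) (hξ : ξ.PosSemidef) (hξtr : ξ.trace = 1)
    (M₀ M₁ M₂ : Matrix (Fin d × Fin d) (Fin d × Fin d) ℂ)
    (hM₀ : M₀.PosSemidef) (hM₁ : M₁.PosSemidef) (hM₂ : M₂.PosSemidef)
    (hnorm : M₀ + M₁ + M₂ = ξᵀ ⊗ₖ (1 : Matrix (Fin d) (Fin d) ℂ))
    (hne₁ : (M₁ * Ω₂).trace = 0) (hne₂ : (M₂ * Ω₁).trace = 0) :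
    ((M₀ * ((η₁ : ℂ) • Ω₁ + (η₂ : ℂ) • Ω₂)).trace).re ≥
      2 * Real.sqrt (η₁ * η₂) *
        traceNorm (hΩ₁.sqrt * (ξᵀ ⊗ₖ (1 : Matrix (Fin d) (Fin d) ℂ)) * hΩ₂.sqrt) :=
  stmt6_general Ω₁ Ω₂ hΩ₁ hΩ₂ η₁ η₂ hη₁ hη₂ ξ M₀ M₁ M₂ hM₀ hM₁ hM₂ hnorm hne₁ hne₂
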